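/- arXiv:2309.11112 — 3 statements merged into one kernel-verified Lean document; each statement's English description precedes it below -/
import Mathlib

section
/- Let w ∈ V⊗⁴ be a superpotential (φ(w) = w), let θ ∈ GL(V), and suppose there exists λ ∈ k, λ ≠ 0, with (θ⊗θ⊗θ⊗θ)(w) = λ·w. Then the Mori–Smith twist w^θ = (θ³⊗θ²⊗θ⊗id)(w) is a twisted superpotential; more precisely, setting θ' := λ⁻¹·θ⁴ ∈ GL(V), one has (θ' ⊗ id ⊗ id ⊗ id)(φ(w^θ)) = w^θ. -/
open TensorProduct

/-- `map4 f g h i = f ⊗ g ⊗ h ⊗ i` acting on the fourfold tensor power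
`V ⊗ V ⊗ V ⊗ V` (right associated). -/
noncomputable def map4 {k : Type*} [Field k] {V : Type*} [AddCommGroup V] [Module k V]
    (f g h i : V →ₗ[k] V) :
    V ⊗[k] (V ⊗[k] (V ⊗[k] V)) →ₗ[k] V ⊗[k] (V ⊗[k] (V ⊗[k] V)) :=
  TensorProduct.map f (TensorProduct.map g (TensorProduct.map h i))

lemma map4_tmul {k : Type*} [Field k] {V : Type*} [AddCommGroup V] [Module k V]
    (f g h i : V →ₗ[k] V) (a b c d : V) :
    map4 f g h i (a ⊗ₜ[k] (b ⊗ₜ[k] (c ⊗ₜ[k] d)))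
      = f a ⊗ₜ[k] (g b ⊗ₜ[k] (h c ⊗ₜ[k] i d)) := rfl

lemma map4_comp {k : Type*} [Field k] {V : Type*} [AddCommGroup V] [Module k V]
    (f g h i f' g' h' i' : V →ₗ[k] V) (x : V ⊗[k] (V ⊗[k] (V ⊗[k] V))) :
    map4 f g h i (map4 f' g' h' i' x)
      = map4 (f ∘ₗ f') (g ∘ₗ g') (h ∘ₗ h') (i ∘ₗ i') x := by
  induction x using TensorProduct.induction_on with
  | zero => simp
  | tmul a y =>
    induction y using TensorProduct.induction_on with
    | zero => simp [tmul_zero]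
    | tmul b z =>
      induction z using TensorProduct.induction_on with
      | zero => simp [tmul_zero]
      | tmul c d => simp [map4_tmul]
      | add z₁ z₂ h₁ h₂ => simp [tmul_add, h₁, h₂]
    | add y₁ y₂ h₁ h₂ => simp [tmul_add, h₁, h₂]
  | add x₁ x₂ h₁ h₂ => simp [h₁, h₂]

lemma phi_map4 {k : Type*} [Field k] {V : Type*} [AddCommGroup V] [Module k V]
    (φ : V ⊗[k] (V ⊗[k] (V ⊗[k] V)) →ₗ[k] V ⊗[k] (V ⊗[k] (V ⊗[k] V)))
    (hφ : ∀ v₁ v₂ v₃ v₄ : V, φ (v₁ ⊗ₜ[k] (v₂ ⊗ₜ[k] (v₃ ⊗ₜ[k] v₄)))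
      = v₄ ⊗ₜ[k] (v₁ ⊗ₜ[k] (v₂ ⊗ₜ[k] v₃)))
    (f g h i : V →ₗ[k] V) (x : V ⊗[k] (V ⊗[k] (V ⊗[k] V))) :
    φ (map4 f g h i x) = map4 i f g h (φ x) := by
  induction x using TensorProduct.induction_on with
  | zero => simp
  | tmul a y =>
    induction y using TensorProduct.induction_on with
    | zero => simp [tmul_zero]
    | tmul b z =>
      induction z using TensorProduct.induction_on with
      | zero => simp [tmul_zero]
      | tmul c d => simp [map4_tmul, hφ]
      | add z₁ z₂ h₁ h₂ => simp only [tmul_add, map_add, h₁, h₂]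
    | add y₁ y₂ h₁ h₂ => simp only [tmul_add, map_add, h₁, h₂]
  | add x₁ x₂ h₁ h₂ => simp only [map_add, h₁, h₂]

/-- Let `w ∈ V⊗⁴` be a superpotential (`φ w = w`), `θ ∈ GL(V)`, and
suppose `(θ⊗θ⊗θ⊗θ)(w) = λ • w` with `λ ≠ 0`.  Then the Mori–Smith twist
`w^θ = (θ³ ⊗ θ² ⊗ θ ⊗ id)(w)` is a twisted superpotential; more precisely, with
`θ' = λ⁻¹ • θ⁴` one has `(θ' ⊗ id ⊗ id ⊗ id)(φ(w^θ)) = w^θ`. -/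
theorem stmt0 {k : Type*} [Field k] [CharZero k]
    {V : Type*} [AddCommGroup V] [Module k V] [FiniteDimensional k V]
    (hdim : Module.finrank k V = 2)
    (φ : V ⊗[k] (V ⊗[k] (V ⊗[k] V)) →ₗ[k] V ⊗[k] (V ⊗[k] (V ⊗[k] V)))
    (hφ : ∀ v₁ v₂ v₃ v₄ : V, φ (v₁ ⊗ₜ[k] (v₂ ⊗ₜ[k] (v₃ ⊗ₜ[k] v₄)))
      = v₄ ⊗ₜ[k] (v₁ ⊗ₜ[k] (v₂ ⊗ₜ[k] v₃)))
    (w : V ⊗[k] (V ⊗[k] (V ⊗[k] V))) (hw : φ w = w)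
    (θ : V ≃ₗ[k] V) (l : k) (hl : l ≠ 0)
    (hθ : map4 θ.toLinearMap θ.toLinearMap θ.toLinearMap θ.toLinearMap w = l • w) :
    map4 (l⁻¹ • ((θ ^ 4 : V ≃ₗ[k] V) : V →ₗ[k] V))
        LinearMap.id LinearMap.id LinearMap.id
      (φ (map4 ((θ ^ 3 : V ≃ₗ[k] V) : V →ₗ[k] V) ((θ ^ 2 : V ≃ₗ[k] V) : V →ₗ[k] V)
          θ.toLinearMap LinearMap.id w))
      = map4 ((θ ^ 3 : V ≃ₗ[k] V) : V →ₗ[k] V) ((θ ^ 2 : V ≃ₗ[k] V) : V →ₗ[k] V)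
          θ.toLinearMap LinearMap.id w := by
  have key : map4 ((θ ^ 4 : V ≃ₗ[k] V) : V →ₗ[k] V) ((θ ^ 3 : V ≃ₗ[k] V) : V →ₗ[k] V)
      ((θ ^ 2 : V ≃ₗ[k] V) : V →ₗ[k] V) θ.toLinearMap w
      = l • map4 ((θ ^ 3 : V ≃ₗ[k] V) : V →ₗ[k] V) ((θ ^ 2 : V ≃ₗ[k] V) : V →ₗ[k] V)
          θ.toLinearMap LinearMap.id w := by
    have := congrArg (map4 ((θ ^ 3 : V ≃ₗ[k] V) : V →ₗ[k] V)
      ((θ ^ 2 : V ≃ₗ[k] V) : V →ₗ[k] V) θ.toLinearMap LinearMap.id) hθ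
    rw [map4_comp, map_smul] at this
    convert this using 3 <;>
    · ext v
      simp [pow_succ, LinearEquiv.mul_apply]
  rw [phi_map4 φ hφ, hw, map4_comp]
  simp only [LinearMap.comp_id, LinearMap.id_comp]
  have h2 : map4 (l⁻¹ • ((θ ^ 4 : V ≃ₗ[k] V) : V →ₗ[k] V))
      ((θ ^ 3 : V ≃ₗ[k] V) : V →ₗ[k] V) ((θ ^ 2 : V ≃ₗ[k] V) : V →ₗ[k] V)
      θ.toLinearMap w
      = l⁻¹ • map4 ((θ ^ 4 : V ≃ₗ[k] V) : V →ₗ[k] V)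
      ((θ ^ 3 : V ≃ₗ[k] V) : V →ₗ[k] V) ((θ ^ 2 : V ≃ₗ[k] V) : V →ₗ[k] V)
      θ.toLinearMap w := by
    simp [map4, TensorProduct.map_smul_left]
  rw [h2, key, smul_smul, inv_mul_cancel₀ hl, one_smul]
end

section
/- Let (E, σ) and (E', σ') be geometric pairs in ℙ(V*)×ℙ(V*), with relation spaces R := R(E,σ) and R' := R(E',σ'). Suppose {φₙ}_{n∈ℤ} is a family of elements of GL(V) such that, with τₙ := \overline{φₙ*}, for every n ∈ ℤ the map τₙ × τₙ₊₁ sends E bijectively onto E' and σ' ∘ (τₙ × τₙ₊₁) = (τₙ₊₁ × τₙ₊₂) ∘ σ on E. Then (φₙ ⊗ φₙ₊₁ ⊗ φₙ₊₂)(R') = R for every n ∈ ℤ. -/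
open TensorProduct

/-- The pairing of `ξ₁ ⊗ ξ₂ ⊗ ξ₃ ∈ V*⊗V*⊗V*` with `V ⊗ V ⊗ V`. -/
noncomputable def ev3 {k : Type*} [Field k] {V : Type*} [AddCommGroup V] [Module k V]
    (ξ₁ ξ₂ ξ₃ : Module.Dual k V) : V ⊗[k] (V ⊗[k] V) →ₗ[k] k :=
  TensorProduct.lift ((LinearMap.mul k k).compl₁₂ ξ₁
    (TensorProduct.lift ((LinearMap.mul k k).compl₁₂ ξ₂ ξ₃)))

/-- `f` vanishes at `(p₁,p₂,p₃) ∈ ℙ(V*)³`. -/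
noncomputable def VanishAt {k : Type*} [Field k] {V : Type*} [AddCommGroup V] [Module k V]
    (f : V ⊗[k] (V ⊗[k] V))
    (p₁ p₂ p₃ : Projectivization k (Module.Dual k V)) : Prop :=
  ev3 p₁.rep p₂.rep p₃.rep f = 0

/-- The relation space `R(E,σ)` of a geometric pair `(E, σ)`. -/
noncomputable def relSpace {k : Type*} [Field k] {V : Type*} [AddCommGroup V] [Module k V]
    (E : Set (Projectivization k (Module.Dual k V) × Projectivization k (Module.Dual k V)))
    (σ : Projectivization k (Module.Dual k V) × Projectivization k (Module.Dual k V) →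
      Projectivization k (Module.Dual k V) × Projectivization k (Module.Dual k V)) :
    Set (V ⊗[k] (V ⊗[k] V)) :=
  {f | ∀ p ∈ E, VanishAt f p.1 p.2 (σ p).2}

/-- The automorphism `\overline{φ*}` of `ℙ(V*)` induced by the dual map of `φ ∈ GL(V)`. -/
noncomputable def projDual {k : Type*} [Field k] {V : Type*} [AddCommGroup V] [Module k V]
    (φ : V ≃ₗ[k] V) :
    Projectivization k (Module.Dual k V) → Projectivization k (Module.Dual k V) :=
  Projectivization.map φ.dualMap.toLinearMap φ.dualMap.injective

section aux
variable {k : Type*} [Field k] {V : Type*} [AddCommGroup V] [Module k V]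

lemma ev3_tmul (ξ₁ ξ₂ ξ₃ : Module.Dual k V) (x y z : V) :
    ev3 ξ₁ ξ₂ ξ₃ (x ⊗ₜ[k] (y ⊗ₜ[k] z)) = ξ₁ x * (ξ₂ y * ξ₃ z) := by
  simp [ev3]

lemma ev3_smul (ξ₁ ξ₂ ξ₃ : Module.Dual k V) (a b c : k) (f : V ⊗[k] (V ⊗[k] V)) :
    ev3 (a • ξ₁) (b • ξ₂) (c • ξ₃) f = (a * b * c) * ev3 ξ₁ ξ₂ ξ₃ f := by
  induction f using TensorProduct.induction_on with
  | zero => simp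
  | tmul x w =>
    induction w using TensorProduct.induction_on with
    | zero => simp [TensorProduct.tmul_zero]
    | tmul y z => simp [ev3_tmul]; ring
    | add w₁ w₂ h₁ h₂ =>
      rw [TensorProduct.tmul_add, map_add, map_add, h₁, h₂, mul_add]
  | add f₁ f₂ h₁ h₂ => rw [map_add, map_add, h₁, h₂, mul_add]

lemma ev3_map (ξ₁ ξ₂ ξ₃ : Module.Dual k V) (φ₁ φ₂ φ₃ : V ≃ₗ[k] V) (f : V ⊗[k] (V ⊗[k] V)) :
    ev3 (φ₁.dualMap ξ₁) (φ₂.dualMap ξ₂) (φ₃.dualMap ξ₃) f =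
      ev3 ξ₁ ξ₂ ξ₃ (TensorProduct.map φ₁.toLinearMap
        (TensorProduct.map φ₂.toLinearMap φ₃.toLinearMap) f) := by
  induction f using TensorProduct.induction_on with
  | zero => simp
  | tmul x w =>
    induction w using TensorProduct.induction_on with
    | zero => simp [TensorProduct.tmul_zero]
    | tmul y z => simp [ev3_tmul]
    | add w₁ w₂ h₁ h₂ =>
      rw [TensorProduct.tmul_add, map_add, h₁, h₂, ← map_add, ← map_add,
        ← TensorProduct.tmul_add]
  | add f₁ f₂ h₁ h₂ => rw [map_add, h₁, h₂, map_add, map_add]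

lemma projDual_rep (φ : V ≃ₗ[k] V) (p : Projectivization k (Module.Dual k V)) :
    ∃ a : kˣ, (a : k) • φ.dualMap p.rep = (projDual φ p).rep := by
  have h : projDual φ p = Projectivization.mk k (φ.dualMap p.rep)
      (fun h => Projectivization.rep_nonzero p (φ.dualMap.injective (by simpa using h))) := by
    conv_lhs => rw [← p.mk_rep]
    rfl
  rw [h]
  exact Projectivization.exists_smul_eq_mk_rep k (φ.dualMap p.rep) _

/-- Key lemma: vanishing at the image points under `projDual` is equivalent to
vanishing of the transformed tensor at the original points. -/
lemma vanish_projDual (φ₁ φ₂ φ₃ : V ≃ₗ[k] V) (f : V ⊗[k] (V ⊗[k] V))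
    (p₁ p₂ p₃ : Projectivization k (Module.Dual k V)) :
    VanishAt f (projDual φ₁ p₁) (projDual φ₂ p₂) (projDual φ₃ p₃) ↔
      VanishAt (TensorProduct.map φ₁.toLinearMap
        (TensorProduct.map φ₂.toLinearMap φ₃.toLinearMap) f) p₁ p₂ p₃ := by
  obtain ⟨a, ha⟩ := projDual_rep φ₁ p₁
  obtain ⟨b, hb⟩ := projDual_rep φ₂ p₂
  obtain ⟨c, hc⟩ := projDual_rep φ₃ p₃
  unfold VanishAt
  rw [← ha, ← hb, ← hc, ev3_smul, ev3_map, mul_eq_zero]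
  have habc : ((a : k) * b * c) ≠ 0 := by
    simp [a.ne_zero, b.ne_zero, c.ne_zero]
  tauto

end aux

/-- Let `(E, σ)`, `(E', σ')` be geometric pairs with relation spaces
`R = R(E,σ)`, `R' = R(E',σ')`.  Suppose `{φₙ}_{n∈ℤ}` is a family in `GL(V)` such that,
with `τₙ := \overline{φₙ*}`, for every `n` the map `τₙ × τₙ₊₁` maps `E` bijectively onto
`E'` and `σ' ∘ (τₙ × τₙ₊₁) = (τₙ₊₁ × τₙ₊₂) ∘ σ` on `E`.  Then
`(φₙ ⊗ φₙ₊₁ ⊗ φₙ₊₂)(R') = R` for every `n ∈ ℤ`. -/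
theorem stmt6 {k : Type*} [Field k] [IsAlgClosed k] [CharZero k]
    {V : Type*} [AddCommGroup V] [Module k V] [FiniteDimensional k V]
    (E E' : Set (Projectivization k (Module.Dual k V) × Projectivization k (Module.Dual k V)))
    (σ σ' : Projectivization k (Module.Dual k V) × Projectivization k (Module.Dual k V) →
      Projectivization k (Module.Dual k V) × Projectivization k (Module.Dual k V))
    (hσE : Set.MapsTo σ E E) (hgeo : ∀ p ∈ E, (σ p).1 = p.2)
    (hσE' : Set.MapsTo σ' E' E') (hgeo' : ∀ p ∈ E', (σ' p).1 = p.2)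
    (φ : ℤ → (V ≃ₗ[k] V))
    (hbij : ∀ n : ℤ,
      Set.BijOn (Prod.map (projDual (φ n)) (projDual (φ (n + 1)))) E E')
    (hcomm : ∀ n : ℤ, ∀ p ∈ E,
      σ' (Prod.map (projDual (φ n)) (projDual (φ (n + 1))) p)
        = Prod.map (projDual (φ (n + 1))) (projDual (φ (n + 2))) (σ p)) :
    ∀ n : ℤ,
      (fun f => TensorProduct.map (φ n).toLinearMap
          (TensorProduct.map (φ (n + 1)).toLinearMap (φ (n + 2)).toLinearMap) f) ''
        relSpace E' σ' = relSpace E σ := by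
  intro n
  set Φe : (V ⊗[k] (V ⊗[k] V)) ≃ₗ[k] (V ⊗[k] (V ⊗[k] V)) :=
    TensorProduct.congr (φ n) (TensorProduct.congr (φ (n + 1)) (φ (n + 2))) with hΦe
  have hΦ : ∀ f, TensorProduct.map (φ n).toLinearMap
      (TensorProduct.map (φ (n + 1)).toLinearMap (φ (n + 2)).toLinearMap) f = Φe f := by
    intro f; rfl
  ext f
  constructor
  · rintro ⟨g, hg, rfl⟩
    intro p hp
    have key := (vanish_projDual (φ n) (φ (n + 1)) (φ (n + 2)) g p.1 p.2 (σ p).2).mp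
    apply key
    have hq := hg _ ((hbij n).mapsTo hp)
    have h2 := hcomm n p hp
    simpa [h2] using hq
  · intro hf
    refine ⟨Φe.symm f, ?_, by simp [hΦ]⟩
    intro q hq
    obtain ⟨p, hp, rfl⟩ := (hbij n).surjOn hq
    have h2 := hcomm n p hp
    rw [h2]
    have key := (vanish_projDual (φ n) (φ (n + 1)) (φ (n + 2)) (Φe.symm f)
      p.1 p.2 (σ p).2).mpr
    have : VanishAt (Φe (Φe.symm f)) p.1 p.2 (σ p).2 := by
      rw [Φe.apply_symm_apply]; exact hf p hp
    exact key (by simpa [hΦ] using this)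
end

section
/- For α ∈ k with α ≠ 0, let A(α) := k⟨x,y⟩/(x²y − α·yx², xy² − α·y²x) (the Type P₁ algebras). For α, α' ∈ k∖{0}, the algebras A(α) and A(α') are isomorphic as graded algebras if and only if α' = α or α' = α⁻¹. -/
noncomputable section

/-- The generator `x` of the free algebra `k⟨x,y⟩`. -/
def Xg (k : Type*) [Field k] : FreeAlgebra k (Fin 2) := FreeAlgebra.ι k 0

/-- The generator `y` of the free algebra `k⟨x,y⟩`. -/
def Yg (k : Type*) [Field k] : FreeAlgebra k (Fin 2) := FreeAlgebra.ι k 1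

/-- The relation identifying `f₁` and `f₂` with `0`; taking `RingQuot` of this relation
gives the quotient of `k⟨x,y⟩` by the two-sided ideal generated by `f₁` and `f₂`. -/
def rel {k : Type*} [Field k] (f₁ f₂ : FreeAlgebra k (Fin 2)) :
    FreeAlgebra k (Fin 2) → FreeAlgebra k (Fin 2) → Prop :=
  fun a b => (a = f₁ ∨ a = f₂) ∧ b = 0

/-- The cubic algebra `k⟨x,y⟩/(f₁, f₂)`. -/
abbrev CubicAlg {k : Type*} [Field k] (f₁ f₂ : FreeAlgebra k (Fin 2)) :=
  RingQuot (rel f₁ f₂)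

/-- The quotient map `k⟨x,y⟩ → k⟨x,y⟩/(f₁, f₂)`. -/
def qmap {k : Type*} [Field k] (f₁ f₂ : FreeAlgebra k (Fin 2)) :
    FreeAlgebra k (Fin 2) →ₐ[k] CubicAlg f₁ f₂ :=
  RingQuot.mkAlgHom k (rel f₁ f₂)

/-- `k⟨x,y⟩/(f₁,f₂)` and `k⟨x,y⟩/(g₁,g₂)` are isomorphic as graded algebras: there is a
`k`-algebra isomorphism mapping the image of `span_k{x, y}` (the degree-one part) onto
the image of `span_k{x, y}`. -/
def GrIso {k : Type*} [Field k] (f₁ f₂ g₁ g₂ : FreeAlgebra k (Fin 2)) : Prop :=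
  ∃ e : CubicAlg f₁ f₂ ≃ₐ[k] CubicAlg g₁ g₂,
    (Submodule.span k {qmap f₁ f₂ (Xg k), qmap f₁ f₂ (Yg k)}).map e.toLinearMap
      = Submodule.span k {qmap g₁ g₂ (Xg k), qmap g₁ g₂ (Yg k)}

namespace Stmt16Aux

open MonoidAlgebra FreeMonoid

variable {k : Type*} [Field k]

abbrev FM := FreeMonoid (Fin 2)
abbrev MA (k : Type*) [Field k] := MonoidAlgebra k FM

def ee (k : Type*) [Field k] : FreeAlgebra k (Fin 2) ≃ₐ[k] MA k :=
  FreeAlgebra.equivMonoidAlgebraFreeMonoid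

/-- degree-3 monomial words -/
def w3 (i j l : Fin 2) : FM := of i * of j * of l

lemma w3_eq_iff (i j l i' j' l' : Fin 2) :
    w3 i j l = w3 i' j' l' ↔ (i = i' ∧ j = j' ∧ l = l') := by
  constructor
  · intro h
    have h2 := congrArg FreeMonoid.toList h
    simp only [w3, toList_mul, toList_of, List.cons_append, List.nil_append,
      List.cons.injEq, and_true] at h2
    tauto
  · rintro ⟨rfl, rfl, rfl⟩; rfl

lemma w3_length (i j l : Fin 2) : (w3 i j l).length = 3 := by
  simp [w3, length_mul, length_of]

/-- set of "sandwiches" of F -/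
def Sand (F : MA k) : Set (MA k) :=
  {z | ∃ u v : FM, z = single u 1 * F * single v 1}

def Idl (F₁ F₂ : MA k) : Submodule k (MA k) :=
  Submodule.span k (Sand F₁ ∪ Sand F₂)

lemma self_mem_Sand (F : MA k) : F ∈ Sand F :=
  ⟨1, 1, by rw [← one_def, one_mul, mul_one]⟩

lemma self_mem_Idl_left (F₁ F₂ : MA k) : F₁ ∈ Idl F₁ F₂ :=
  Submodule.subset_span (Or.inl (self_mem_Sand F₁))

lemma self_mem_Idl_right (F₁ F₂ : MA k) : F₂ ∈ Idl F₁ F₂ :=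
  Submodule.subset_span (Or.inr (self_mem_Sand F₂))

lemma single_mul_sand {F z : MA k} (hz : z ∈ Sand F) (w : FM) (cc : k) :
    single w cc * z ∈ Submodule.span k (Sand F) := by
  obtain ⟨u, v, rfl⟩ := hz
  have : single w cc * (single u 1 * F * single v 1)
      = cc • (single (w * u) 1 * F * single v 1) := by
    rw [← mul_assoc, ← mul_assoc, single_mul_single, mul_one]
    rw [show (single (w*u) cc : MA k) = cc • single (w*u) 1 by
      rw [MonoidAlgebra.smul_single, smul_eq_mul, mul_one]]
    rw [smul_mul_assoc, smul_mul_assoc]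
  rw [this]
  exact Submodule.smul_mem _ _ (Submodule.subset_span ⟨w * u, v, rfl⟩)

lemma sand_mul_single {F z : MA k} (hz : z ∈ Sand F) (w : FM) (cc : k) :
    z * single w cc ∈ Submodule.span k (Sand F) := by
  obtain ⟨u, v, rfl⟩ := hz
  have : (single u 1 * F * single v 1) * single w cc
      = cc • (single u 1 * F * single (v * w) 1) := by
    rw [mul_assoc, mul_assoc, single_mul_single, one_mul]
    rw [show (single (v*w) cc : MA k) = cc • single (v*w) 1 by
      rw [MonoidAlgebra.smul_single, smul_eq_mul, mul_one]]
    rw [mul_smul_comm, mul_smul_comm, mul_assoc]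
  rw [this]
  exact Submodule.smul_mem _ _ (Submodule.subset_span ⟨u, v * w, rfl⟩)

lemma mul_mem_Idl (F₁ F₂ : MA k) (m z : MA k) (hz : z ∈ Idl F₁ F₂) :
    m * z ∈ Idl F₁ F₂ := by
  induction m using MonoidAlgebra.induction_linear with
  | zero => rw [zero_mul]; exact (Idl F₁ F₂).zero_mem
  | add f g hf hg => rw [add_mul]; exact (Idl F₁ F₂).add_mem hf hg
  | single w cc =>
    refine Submodule.span_induction (fun x hx => ?_) ?_ (fun x y _ _ hx hy => ?_)
      (fun a x _ hx => ?_) hz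
    · rcases hx with hx | hx
      · exact Submodule.span_mono Set.subset_union_left (single_mul_sand hx w cc)
      · exact Submodule.span_mono Set.subset_union_right (single_mul_sand hx w cc)
    · rw [mul_zero]; exact (Idl F₁ F₂).zero_mem
    · rw [mul_add]; exact (Idl F₁ F₂).add_mem hx hy
    · rw [mul_smul_comm]; exact (Idl F₁ F₂).smul_mem _ hx

lemma Idl_mul_mem (F₁ F₂ : MA k) (m z : MA k) (hz : z ∈ Idl F₁ F₂) :
    z * m ∈ Idl F₁ F₂ := by
  induction m using MonoidAlgebra.induction_linear with
  | zero => rw [mul_zero]; exact (Idl F₁ F₂).zero_mem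
  | add f g hf hg => rw [mul_add]; exact (Idl F₁ F₂).add_mem hf hg
  | single w cc =>
    refine Submodule.span_induction (fun x hx => ?_) ?_ (fun x y _ _ hx hy => ?_)
      (fun a x _ hx => ?_) hz
    · rcases hx with hx | hx
      · exact Submodule.span_mono Set.subset_union_left (sand_mul_single hx w cc)
      · exact Submodule.span_mono Set.subset_union_right (sand_mul_single hx w cc)
    · rw [zero_mul]; exact (Idl F₁ F₂).zero_mem
    · rw [add_mul]; exact (Idl F₁ F₂).add_mem hx hy
    · rw [smul_mul_assoc]; exact (Idl F₁ F₂).smul_mem _ hx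

/-- the congruence on the free algebra induced by `Idl` -/
def idlCon (f₁ f₂ : FreeAlgebra k (Fin 2)) : RingCon (FreeAlgebra k (Fin 2)) where
  r a b := ee k (a - b) ∈ Idl (ee k f₁) (ee k f₂)
  iseqv := by
    refine ⟨fun a => by simp, fun {a b} h => ?_, fun {a b c} h1 h2 => ?_⟩
    · have := (Idl (ee k f₁) (ee k f₂)).neg_mem h
      rwa [← map_neg, neg_sub] at this
    · have := (Idl (ee k f₁) (ee k f₂)).add_mem h1 h2
      rwa [← map_add, sub_add_sub_cancel] at this
  mul' := by
    intro a b c d h1 h2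
    show ee k (a * c - b * d) ∈ _
    have key : ee k (a * c - b * d)
        = ee k a * ee k (c - d) + ee k (a - b) * ee k d := by
      simp only [map_sub, map_mul]; noncomm_ring
    rw [key]
    exact (Idl _ _).add_mem (mul_mem_Idl _ _ _ _ h2) (Idl_mul_mem _ _ _ _ h1)
  add' := by
    intro a b c d h1 h2
    show ee k (a + c - (b + d)) ∈ _
    have key : ee k (a + c - (b + d)) = ee k (a - b) + ee k (c - d) := by
      simp only [map_sub, map_add]; noncomm_ring
    rw [key]
    exact (Idl _ _).add_mem h1 h2

/-- Main kernel lemma: anything killed by the quotient map lies in the span of sandwiches. -/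
lemma mem_Idl_of_qmap_eq_zero (f₁ f₂ g : FreeAlgebra k (Fin 2))
    (h : qmap f₁ f₂ g = 0) :
    ee k g ∈ Idl (ee k f₁) (ee k f₂) := by
  set c := idlCon f₁ f₂ with hc
  have hrel : ∀ ⦃a b : FreeAlgebra k (Fin 2)⦄, rel f₁ f₂ a b →
      RingCon.mk' c a = RingCon.mk' c b := by
    rintro a b ⟨ha, rfl⟩
    have : c a 0 := by
      show ee k (a - 0) ∈ _
      rw [sub_zero]
      rcases ha with rfl | rfl
      · exact self_mem_Idl_left _ _
      · exact self_mem_Idl_right _ _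
    exact (RingCon.eq c).mpr this
  have h0 : RingQuot.mkRingHom (rel f₁ f₂) g = RingQuot.mkRingHom (rel f₁ f₂) 0 := by
    have hcoe := RingQuot.mkAlgHom_coe k (rel f₁ f₂)
    have e1 : RingQuot.mkRingHom (rel f₁ f₂) g = RingQuot.mkAlgHom k (rel f₁ f₂) g := by
      rw [← hcoe]; rfl
    have e2 : RingQuot.mkRingHom (rel f₁ f₂) 0 = RingQuot.mkAlgHom k (rel f₁ f₂) 0 := by
      rw [← hcoe]; rfl
    rw [e1, e2]
    have : qmap f₁ f₂ g = RingQuot.mkAlgHom k (rel f₁ f₂) g := rfl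
    rw [← this, h, map_zero]
  have h1 := congrArg (RingQuot.lift ⟨RingCon.mk' c, hrel⟩) h0
  rw [RingQuot.lift_mkRingHom_apply, RingQuot.lift_mkRingHom_apply] at h1
  have h2 : c g 0 := (RingCon.eq c).mp h1
  have h3 : ee k (g - 0) ∈ Idl (ee k f₁) (ee k f₂) := h2
  rwa [sub_zero] at h3

-- PART 2: degree projections

def pideg (n : ℕ) : MA k →ₗ[k] MA k where
  toFun f := MonoidAlgebra.ofCoeff (Finsupp.filter (fun w => FreeMonoid.length w = n) f.coeff)
  map_add' _ _ := congrArg MonoidAlgebra.ofCoeff Finsupp.filter_add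
  map_smul' _ _ := congrArg MonoidAlgebra.ofCoeff Finsupp.filter_smul

lemma sand_support {F : MA k} (hF : ∀ w ∈ F.coeff.support, FreeMonoid.length w = 3) (u v : FM) :
    ∀ x ∈ (single u (1:k) * F * single v 1).coeff.support,
      x.length = u.length + 3 + v.length := by
  classical
  intro x hx
  have hu : (single u (1:k)).coeff.support = {u} := Finsupp.support_single_ne_zero _ one_ne_zero
  have hv : (single v (1:k)).coeff.support = {v} := Finsupp.support_single_ne_zero _ one_ne_zero
  have hx1 := MonoidAlgebra.support_coeff_mul_subset (single u (1:k) * F) (single v 1) hx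
  rw [hv] at hx1
  rcases Finset.mem_mul.mp hx1 with ⟨y, hy, z, hz, hyz⟩
  rcases Finset.mem_singleton.mp hz
  have h2 := MonoidAlgebra.support_coeff_mul_subset (single u (1:k)) F hy
  rw [hu] at h2
  rcases Finset.mem_mul.mp h2 with ⟨p, hp, w, hw, hpw⟩
  rcases Finset.mem_singleton.mp hp
  subst hyz; subst hpw
  rw [length_mul, length_mul, hF w hw]

lemma pideg1_sand {F : MA k} (hF : ∀ w ∈ F.coeff.support, FreeMonoid.length w = 3)
    {z : MA k} (hz : z ∈ Sand F) : pideg 1 z = 0 := by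
  obtain ⟨u, v, rfl⟩ := hz
  refine MonoidAlgebra.coeff_injective ((Finsupp.filter_eq_zero_iff _ _).mpr ?_)
  intro x hx
  by_contra hne
  have hmem : x ∈ (single u (1:k) * F * single v 1).coeff.support := Finsupp.mem_support_iff.mpr hne
  have := sand_support hF u v x hmem
  omega

lemma pideg3_sand {F : MA k} (hF : ∀ w ∈ F.coeff.support, FreeMonoid.length w = 3)
    {z : MA k} (hz : z ∈ Sand F) : pideg 3 z ∈ Submodule.span k {F} := by
  obtain ⟨u, v, rfl⟩ := hz
  by_cases hu : u = 1
  · by_cases hv : v = 1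
    · subst hu; subst hv
      rw [← one_def, one_mul, mul_one]
      have : pideg (k := k) 3 F = F := by
        refine MonoidAlgebra.coeff_injective ((Finsupp.filter_eq_self_iff _ _).mpr ?_)
        intro x hx
        exact hF x (Finsupp.mem_support_iff.mpr hx)
      rw [this]
      exact Submodule.mem_span_singleton_self F
    · have hlv : 0 < v.length := Nat.pos_of_ne_zero (fun h => hv (length_eq_zero.mp h))
      have : pideg (k := k) 3 (single u 1 * F * single v 1) = 0 := by
        refine MonoidAlgebra.coeff_injective ((Finsupp.filter_eq_zero_iff _ _).mpr ?_)
        intro x hx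
        by_contra hne
        have := sand_support hF u v x (Finsupp.mem_support_iff.mpr hne)
        omega
      rw [this]; exact Submodule.zero_mem _
  · have hlu : 0 < u.length := Nat.pos_of_ne_zero (fun h => hu (length_eq_zero.mp h))
    have : pideg (k := k) 3 (single u 1 * F * single v 1) = 0 := by
      refine MonoidAlgebra.coeff_injective ((Finsupp.filter_eq_zero_iff _ _).mpr ?_)
      intro x hx
      by_contra hne
      have := sand_support hF u v x (Finsupp.mem_support_iff.mpr hne)
      omega
    rw [this]; exact Submodule.zero_mem _

lemma pideg1_Idl {F₁ F₂ : MA k}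
    (hF₁ : ∀ w ∈ F₁.coeff.support, FreeMonoid.length w = 3)
    (hF₂ : ∀ w ∈ F₂.coeff.support, FreeMonoid.length w = 3)
    {z : MA k} (hz : z ∈ Idl F₁ F₂) : pideg 1 z = 0 := by
  refine Submodule.span_induction (fun x hx => ?_) (map_zero _)
    (fun x y _ _ hx hy => by rw [map_add, hx, hy, add_zero])
    (fun a x _ hx => by rw [map_smul, hx, smul_zero]) hz
  rcases hx with hx | hx
  · exact pideg1_sand hF₁ hx
  · exact pideg1_sand hF₂ hx

lemma pideg3_Idl {F₁ F₂ : MA k}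
    (hF₁ : ∀ w ∈ F₁.coeff.support, FreeMonoid.length w = 3)
    (hF₂ : ∀ w ∈ F₂.coeff.support, FreeMonoid.length w = 3)
    {z : MA k} (hz : z ∈ Idl F₁ F₂) :
    pideg 3 z ∈ Submodule.span k {F₁, F₂} := by
  refine Submodule.span_induction (fun x hx => ?_)
    (by rw [map_zero]; exact Submodule.zero_mem _)
    (fun x y _ _ hx hy => by rw [map_add]; exact Submodule.add_mem _ hx hy)
    (fun a x _ hx => by rw [map_smul]; exact Submodule.smul_mem _ _ hx) hz
  have m1 : Submodule.span k ({F₁} : Set (MA k)) ≤ Submodule.span k {F₁, F₂} :=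
    Submodule.span_mono (Set.singleton_subset_iff.mpr (Set.mem_insert _ _))
  have m2 : Submodule.span k ({F₂} : Set (MA k)) ≤ Submodule.span k {F₁, F₂} :=
    Submodule.span_mono (Set.singleton_subset_iff.mpr (Set.mem_insert_of_mem _ rfl))
  rcases hx with hx | hx
  · exact m1 (pideg3_sand hF₁ hx)
  · exact m2 (pideg3_sand hF₂ hx)

-- PART 3: explicit computations

def Xm (k : Type*) [Field k] : MA k := single (of 0) 1
def Ym (k : Type*) [Field k] : MA k := single (of 1) 1
def ws (i j l : Fin 2) : MA k := single (w3 i j l) 1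

lemma ee_Xg : ee k (Xg k) = Xm k := by
  simp [ee, Xg, Xm, FreeAlgebra.equivMonoidAlgebraFreeMonoid]

lemma ee_Yg : ee k (Yg k) = Ym k := by
  simp [ee, Yg, Ym, FreeAlgebra.equivMonoidAlgebraFreeMonoid]

lemma mul3 (a₁ a₂ b₁ b₂ c₁ c₂ : k) :
    (a₁ • Xm k + a₂ • Ym k) * (b₁ • Xm k + b₂ • Ym k) * (c₁ • Xm k + c₂ • Ym k) =
      (a₁*b₁*c₁) • (ws 0 0 0 : MA k) + (a₁*b₁*c₂) • ws 0 0 1 + (a₁*b₂*c₁) • ws 0 1 0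
      + (a₁*b₂*c₂) • ws 0 1 1 + (a₂*b₁*c₁) • ws 1 0 0 + (a₂*b₁*c₂) • ws 1 0 1
      + (a₂*b₂*c₁) • ws 1 1 0 + (a₂*b₂*c₂) • ws 1 1 1 := by
  simp only [Xm, Ym, ws, w3, add_mul, mul_add, smul_mul_assoc, mul_smul_comm,
    single_mul_single, one_mul, mul_one, smul_smul]
  module

def cf (w : FM) : MA k →ₗ[k] k where
  toFun f := f.coeff w
  map_add' _ _ := rfl
  map_smul' _ _ := rfl

lemma cf_apply (w : FM) (f : MA k) : cf w f = f.coeff w := rfl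

lemma ws_apply (i j l i' j' l' : Fin 2) :
    (ws i j l : MA k).coeff (w3 i' j' l') = if i = i' ∧ j = j' ∧ l = l' then 1 else 0 := by
  classical
  rw [ws, MonoidAlgebra.coeff_single, Finsupp.single_apply]
  simp [w3_eq_iff]

/-- the relator `x²y - βyx²` -/
def r1 (k : Type*) [Field k] (β : k) : FreeAlgebra k (Fin 2) :=
  Xg k * Xg k * Yg k - β • (Yg k * Xg k * Xg k)

/-- the relator `xy² - βy²x` -/
def r2 (k : Type*) [Field k] (β : k) : FreeAlgebra k (Fin 2) :=
  Xg k * Yg k * Yg k - β • (Yg k * Yg k * Xg k)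

lemma ee_r1 (β : k) : ee k (r1 k β) = (ws 0 0 1 : MA k) - β • ws 1 0 0 := by
  simp only [r1, map_sub, map_smul, map_mul, ee_Xg, ee_Yg, Xm, Ym, ws, w3,
    single_mul_single, one_mul, mul_one]

lemma ee_r2 (β : k) : ee k (r2 k β) = (ws 0 1 1 : MA k) - β • ws 1 1 0 := by
  simp only [r2, map_sub, map_smul, map_mul, ee_Xg, ee_Yg, Xm, Ym, ws, w3,
    single_mul_single, one_mul, mul_one]

lemma suppF (β : k) (i j l i' j' l' : Fin 2) :
    ∀ w ∈ ((ws i j l : MA k) - β • ws i' j' l').coeff.support, FreeMonoid.length w = 3 := by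
  classical
  intro w hw
  have h1 := Finsupp.support_sub (f := (ws i j l : MA k).coeff) (g := (β • ws i' j' l' : MA k).coeff) hw
  rcases Finset.mem_union.mp h1 with h | h
  · have := Finsupp.support_single_subset (a := w3 i j l) (b := (1:k)) h
    rw [Finset.mem_singleton.mp this]; exact w3_length _ _ _
  · have h2 := Finsupp.support_smul (b := β) (g := (ws i' j' l' : MA k).coeff) h
    have := Finsupp.support_single_subset (a := w3 i' j' l') (b := (1:k)) h2
    rw [Finset.mem_singleton.mp this]; exact w3_length _ _ _

lemma supp_ee_r1 (β : k) : ∀ w ∈ (ee k (r1 k β)).coeff.support, FreeMonoid.length w = 3 := by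
  rw [ee_r1]; exact suppF β 0 0 1 1 0 0

lemma supp_ee_r2 (β : k) : ∀ w ∈ (ee k (r2 k β)).coeff.support, FreeMonoid.length w = 3 := by
  rw [ee_r2]; exact suppF β 0 1 1 1 1 0

/-- linear independence of the images of the generators in the quotient -/
lemma indep (f₁ f₂ : FreeAlgebra k (Fin 2))
    (h₁ : ∀ w ∈ (ee k f₁).coeff.support, FreeMonoid.length w = 3)
    (h₂ : ∀ w ∈ (ee k f₂).coeff.support, FreeMonoid.length w = 3)
    (s t : k) (h : s • qmap f₁ f₂ (Xg k) + t • qmap f₁ f₂ (Yg k) = 0) :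
    s = 0 ∧ t = 0 := by
  have h0 : qmap f₁ f₂ (s • Xg k + t • Yg k) = 0 := by
    rw [map_add, map_smul, map_smul]; exact h
  have h1 := mem_Idl_of_qmap_eq_zero _ _ _ h0
  have h2 := pideg1_Idl h₁ h₂ h1
  have h3 : ee k (s • Xg k + t • Yg k) = s • Xm k + t • Ym k := by
    rw [map_add, map_smul, map_smul, ee_Xg, ee_Yg]
  rw [h3] at h2
  have h4 : pideg (k := k) 1 (s • Xm k + t • Ym k) = s • Xm k + t • Ym k := by
    rw [map_add, map_smul, map_smul]
    have e1 : pideg (k := k) 1 (Xm k) = Xm k :=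
      congrArg MonoidAlgebra.ofCoeff (Finsupp.filter_single_of_pos _ (by simp [length_of]))
    have e2 : pideg (k := k) 1 (Ym k) = Ym k :=
      congrArg MonoidAlgebra.ofCoeff (Finsupp.filter_single_of_pos _ (by simp [length_of]))
    rw [e1, e2]
  rw [h4] at h2
  have hof : (of 0 : FM) ≠ of 1 := by
    intro hcon
    have := congrArg FreeMonoid.toList hcon
    simp only [toList_of, List.cons.injEq, and_true] at this
    exact absurd this (by decide)
  constructor
  · have := congrArg (cf (k := k) (of 0)) h2
    simpa [map_add, map_smul, cf_apply, Xm, Ym, MonoidAlgebra.coeff_single, Finsupp.single_apply, hof, hof.symm] using this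
  · have := congrArg (cf (k := k) (of 1)) h2
    simpa [map_add, map_smul, cf_apply, Xm, Ym, MonoidAlgebra.coeff_single, Finsupp.single_apply, hof, hof.symm] using this

-- PART 4: the swap isomorphism (backward direction)

def tau (k : Type*) [Field k] : FreeAlgebra k (Fin 2) →ₐ[k] FreeAlgebra k (Fin 2) :=
  FreeAlgebra.lift k (fun i => if i = 0 then Yg k else Xg k)

lemma tau_X : tau k (Xg k) = Yg k := by
  rw [tau, Xg, FreeAlgebra.lift_ι_apply, if_pos rfl]

lemma tau_Y : tau k (Yg k) = Xg k := by
  rw [tau, Yg, FreeAlgebra.lift_ι_apply, if_neg (by decide)]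

lemma tau_r1 (β : k) (hβ : β ≠ 0) : tau k (r1 k β) = (-β) • r2 k β⁻¹ := by
  rw [r1, r2, map_sub, map_smul, map_mul, map_mul, map_mul, map_mul, tau_X, tau_Y]
  rw [smul_sub, smul_smul, neg_mul, mul_inv_cancel₀ hβ]
  module

lemma tau_r2 (β : k) (hβ : β ≠ 0) : tau k (r2 k β) = (-β) • r1 k β⁻¹ := by
  rw [r1, r2, map_sub, map_smul, map_mul, map_mul, map_mul, map_mul, tau_X, tau_Y]
  rw [smul_sub, smul_smul, neg_mul, mul_inv_cancel₀ hβ]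
  module

lemma qmap_rel1 (f₁ f₂ : FreeAlgebra k (Fin 2)) : qmap f₁ f₂ f₁ = 0 := by
  have h : qmap f₁ f₂ f₁ = qmap f₁ f₂ 0 :=
    RingQuot.mkAlgHom_rel k ⟨Or.inl rfl, rfl⟩
  rw [h, map_zero]

lemma qmap_rel2 (f₁ f₂ : FreeAlgebra k (Fin 2)) : qmap f₁ f₂ f₂ = 0 := by
  have h : qmap f₁ f₂ f₂ = qmap f₁ f₂ 0 :=
    RingQuot.mkAlgHom_rel k ⟨Or.inr rfl, rfl⟩
  rw [h, map_zero]

def Phiswap (β γ : k) (hβ : β ≠ 0) (hγ : γ = β⁻¹) :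
    CubicAlg (r1 k β) (r2 k β) →ₐ[k] CubicAlg (r1 k γ) (r2 k γ) :=
  RingQuot.liftAlgHom k ⟨(qmap (r1 k γ) (r2 k γ)).comp (tau k), by
    rintro a b ⟨ha, rfl⟩
    rw [AlgHom.comp_apply, AlgHom.comp_apply, map_zero, map_zero]
    rcases ha with rfl | rfl
    · rw [tau_r1 β hβ, map_smul, ← hγ, qmap_rel2, smul_zero]
    · rw [tau_r2 β hβ, map_smul, ← hγ, qmap_rel1, smul_zero]⟩

lemma Phiswap_apply (β γ : k) (hβ : β ≠ 0) (hγ : γ = β⁻¹) (z : FreeAlgebra k (Fin 2)) :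
    Phiswap β γ hβ hγ (qmap (r1 k β) (r2 k β) z) = qmap (r1 k γ) (r2 k γ) (tau k z) :=
  RingQuot.liftAlgHom_mkAlgHom_apply _ _ _ _

lemma cubic_hom_ext {f₁ f₂ : FreeAlgebra k (Fin 2)} {B : Type*} [Semiring B] [Algebra k B]
    {φ ψ : CubicAlg f₁ f₂ →ₐ[k] B}
    (h : ∀ z, φ (qmap f₁ f₂ z) = ψ (qmap f₁ f₂ z)) : φ = ψ := by
  apply AlgHom.ext; intro x
  obtain ⟨y, rfl⟩ := RingQuot.mkAlgHom_surjective k (rel f₁ f₂) x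
  exact h y

lemma tau_tau (z : FreeAlgebra k (Fin 2)) : tau k (tau k z) = z := by
  have h : (tau k).comp (tau k) = AlgHom.id k (FreeAlgebra k (Fin 2)) := by
    apply FreeAlgebra.hom_ext
    funext i
    fin_cases i
    · show tau k (tau k (Xg k)) = Xg k
      rw [tau_X, tau_Y]
    · show tau k (tau k (Yg k)) = Yg k
      rw [tau_Y, tau_X]
  calc tau k (tau k z) = ((tau k).comp (tau k)) z := rfl
    _ = z := by rw [h]; rfl

def swapEquiv (β γ : k) (hβ : β ≠ 0) (hγ : γ = β⁻¹) :
    CubicAlg (r1 k β) (r2 k β) ≃ₐ[k] CubicAlg (r1 k γ) (r2 k γ) := by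
  have hγ0 : γ ≠ 0 := by rw [hγ]; exact inv_ne_zero hβ
  have hβγ : β = γ⁻¹ := by rw [hγ, inv_inv]
  refine AlgEquiv.ofAlgHom (Phiswap β γ hβ hγ) (Phiswap γ β hγ0 hβγ) ?_ ?_
  · apply cubic_hom_ext
    intro z
    rw [AlgHom.comp_apply, Phiswap_apply, Phiswap_apply, tau_tau, AlgHom.id_apply]
  · apply cubic_hom_ext
    intro z
    rw [AlgHom.comp_apply, Phiswap_apply, Phiswap_apply, tau_tau, AlgHom.id_apply]

lemma swapEquiv_apply (β γ : k) (hβ : β ≠ 0) (hγ : γ = β⁻¹) (z : FreeAlgebra k (Fin 2)) :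
    swapEquiv β γ hβ hγ (qmap (r1 k β) (r2 k β) z) = qmap (r1 k γ) (r2 k γ) (tau k z) := by
  rw [swapEquiv]
  exact Phiswap_apply β γ hβ hγ z

lemma griso_swap (β γ : k) (hβ : β ≠ 0) (hγ : γ = β⁻¹) :
    GrIso (r1 k β) (r2 k β) (r1 k γ) (r2 k γ) := by
  refine ⟨swapEquiv β γ hβ hγ, ?_⟩
  rw [Submodule.map_span, Set.image_pair]
  have h1 : (swapEquiv β γ hβ hγ).toLinearMap (qmap (r1 k β) (r2 k β) (Xg k))
      = qmap (r1 k γ) (r2 k γ) (Yg k) := by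
    show swapEquiv β γ hβ hγ (qmap (r1 k β) (r2 k β) (Xg k)) = _
    rw [swapEquiv_apply, tau_X]
  have h2 : (swapEquiv β γ hβ hγ).toLinearMap (qmap (r1 k β) (r2 k β) (Yg k))
      = qmap (r1 k γ) (r2 k γ) (Xg k) := by
    show swapEquiv β γ hβ hγ (qmap (r1 k β) (r2 k β) (Yg k)) = _
    rw [swapEquiv_apply, tau_Y]
  rw [h1, h2, Set.pair_comm]

-- PART 5: the scalar classification

lemma solve (α α' a b c d s₁ t₁ s₂ t₂ : k) (hα : α ≠ 0) (hα' : α' ≠ 0)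
    (hdet : a*d - b*c ≠ 0)
    (e000 : a*a*b - α*(b*a*a) = 0)
    (e001 : a*a*d - α*(b*a*c) = s₁)
    (e011 : a*c*d - α*(b*c*c) = t₁)
    (e100 : c*a*b - α*(d*a*a) = -(α'*s₁))
    (e101 : c*a*d - α*(d*a*c) = 0)
    (e110 : c*c*b - α*(d*c*a) = -(α'*t₁))
    (e111 : c*c*d - α*(d*c*c) = 0)
    (g001 : a*b*d - α*(b*b*c) = s₂)
    (g011 : a*d*d - α*(b*d*c) = t₂)
    (g100 : c*b*b - α*(d*b*a) = -(α'*s₂))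
    (g110 : c*d*b - α*(d*d*a) = -(α'*t₂)) :
    α' = α ∨ α' = α⁻¹ := by
  by_cases h1 : α = 1
  · subst h1
    left
    by_contra hA
    have hA1 : (1:k) - α' ≠ 0 := sub_ne_zero.mpr (fun hh => hA hh.symm)
    have hz : (a*d - b*c) * ((1:k) - α') ≠ 0 := mul_ne_zero hdet hA1
    have ka : a * ((a*d - b*c) * ((1:k) - α')) = 0 := by
      linear_combination (-α') * e001 - e100
    have kc : c * ((a*d - b*c) * ((1:k) - α')) = 0 := by
      linear_combination (-α') * e011 - e110
    have kb : b * ((a*d - b*c) * ((1:k) - α')) = 0 := by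
      linear_combination (-α') * g001 - g100
    have kd : d * ((a*d - b*c) * ((1:k) - α')) = 0 := by
      linear_combination (-α') * g011 - g110
    have ha0 : a = 0 := by rcases mul_eq_zero.mp ka with h | h; exact h; exact absurd h hz
    have hb0 : b = 0 := by rcases mul_eq_zero.mp kb with h | h; exact h; exact absurd h hz
    have hc0 : c = 0 := by rcases mul_eq_zero.mp kc with h | h; exact h; exact absurd h hz
    exact hdet (by rw [ha0, hb0]; ring)
  · have h1' : (1:k) - α ≠ 0 := sub_ne_zero.mpr (fun hh => h1 hh.symm)
    have ha2b : a*(a*b) = 0 := by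
      have h2 : (a*(a*b))*((1:k)-α) = 0 := by linear_combination e000
      rcases mul_eq_zero.mp h2 with h | h; exact h; exact absurd h h1'
    have hacd : a*(c*d) = 0 := by
      have h2 : (a*(c*d))*((1:k)-α) = 0 := by linear_combination e101
      rcases mul_eq_zero.mp h2 with h | h; exact h; exact absurd h h1'
    have hccd : c*(c*d) = 0 := by
      have h2 : (c*(c*d))*((1:k)-α) = 0 := by linear_combination e111
      rcases mul_eq_zero.mp h2 with h | h; exact h; exact absurd h h1'
    by_cases ha : a = 0
    · right
      have hbne : b ≠ 0 := by
        intro hh; exact hdet (by rw [ha, hh]; ring)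
      have hcne : c ≠ 0 := by
        intro hh; exact hdet (by rw [ha, hh]; ring)
      have hd0 : d = 0 := by
        rcases mul_eq_zero.mp hccd with h | h
        · exact absurd h hcne
        · rcases mul_eq_zero.mp h with h' | h'
          · exact absurd h' hcne
          · exact h'
      subst ha; subst hd0
      have key : (b*(c*c))*(α'*α - 1) = 0 := by
        linear_combination (-α') * e011 - e110
      have hkey : α'*α - 1 = 0 := by
        rcases mul_eq_zero.mp key with h | h
        · rcases mul_eq_zero.mp h with h' | h'
          · exact absurd h' hbne
          · rcases mul_eq_zero.mp h' with h'' | h''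
            · exact absurd h'' hcne
            · exact absurd h'' hcne
        · exact h
      exact eq_inv_of_mul_eq_one_left (by linear_combination hkey)
    · left
      have hb0 : b = 0 := by
        rcases mul_eq_zero.mp ha2b with h | h
        · exact absurd h ha
        · rcases mul_eq_zero.mp h with h' | h'
          · exact absurd h' ha
          · exact h'
      have hdne : d ≠ 0 := by
        intro hh; exact hdet (by rw [hb0, hh]; ring)
      have hc0 : c = 0 := by
        rcases mul_eq_zero.mp hacd with h | h
        · exact absurd h ha
        · rcases mul_eq_zero.mp h with h' | h'
          · exact h'
          · exact absurd h' hdne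
      subst hb0; subst hc0
      have key : (a*(a*d))*(α' - α) = 0 := by
        linear_combination α' * e001 + e100
      have hkey : α' - α = 0 := by
        rcases mul_eq_zero.mp key with h | h
        · rcases mul_eq_zero.mp h with h' | h'
          · exact absurd h' ha
          · rcases mul_eq_zero.mp h' with h'' | h''
            · exact absurd h'' ha
            · exact absurd h'' hdne
        · exact h
      exact sub_eq_zero.mp hkey

-- PART 6: forward direction

lemma pideg3_ws (i j l : Fin 2) : pideg (k := k) 3 (ws i j l) = ws i j l :=
  congrArg MonoidAlgebra.ofCoeff (Finsupp.filter_single_of_pos _ (w3_length i j l))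

lemma forward (α α' : k) (hα : α ≠ 0) (hα' : α' ≠ 0)
    (h : GrIso (r1 k α) (r2 k α) (r1 k α') (r2 k α')) : α' = α ∨ α' = α⁻¹ := by
  obtain ⟨e, he⟩ := h
  set X := qmap (r1 k α) (r2 k α) (Xg k) with hXdef
  set Y := qmap (r1 k α) (r2 k α) (Yg k) with hYdef
  set X' := qmap (r1 k α') (r2 k α') (Xg k) with hX'def
  set Y' := qmap (r1 k α') (r2 k α') (Yg k) with hY'def
  have indep' := indep (r1 k α') (r2 k α') (supp_ee_r1 α') (supp_ee_r2 α')
  -- the matrix of e on degree one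
  have hmemX : e X ∈ Submodule.span k {X', Y'} := by
    rw [← he]
    exact ⟨X, Submodule.subset_span (Set.mem_insert _ _), rfl⟩
  have hmemY : e Y ∈ Submodule.span k {X', Y'} := by
    rw [← he]
    exact ⟨Y, Submodule.subset_span (Set.mem_insert_of_mem _ rfl), rfl⟩
  obtain ⟨a, c, hac⟩ := Submodule.mem_span_pair.mp hmemX
  obtain ⟨b, d, hbd⟩ := Submodule.mem_span_pair.mp hmemY
  -- invertibility of the matrix
  have hXin : X' ∈ (Submodule.span k {X, Y}).map e.toLinearMap := by
    rw [he]; exact Submodule.subset_span (Set.mem_insert _ _)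
  obtain ⟨z1, hz1, hez1⟩ := hXin
  obtain ⟨p, q, hpq⟩ := Submodule.mem_span_pair.mp hz1
  have hYin : Y' ∈ (Submodule.span k {X, Y}).map e.toLinearMap := by
    rw [he]; exact Submodule.subset_span (Set.mem_insert_of_mem _ rfl)
  obtain ⟨z2, hz2, hez2⟩ := hYin
  obtain ⟨r, s, hrs⟩ := Submodule.mem_span_pair.mp hz2
  have hXid : X' = (p*a + q*b) • X' + (p*c + q*d) • Y' := by
    have h8 : e.toLinearMap z1 = (p*a + q*b) • X' + (p*c + q*d) • Y' := by
      rw [← hpq, map_add, map_smul, map_smul]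
      rw [show e.toLinearMap X = e X from rfl, show e.toLinearMap Y = e Y from rfl,
        ← hac, ← hbd]
      module
    rw [hez1] at h8
    exact h8
  have hYid : Y' = (r*a + s*b) • X' + (r*c + s*d) • Y' := by
    have h8 : e.toLinearMap z2 = (r*a + s*b) • X' + (r*c + s*d) • Y' := by
      rw [← hrs, map_add, map_smul, map_smul]
      rw [show e.toLinearMap X = e X from rfl, show e.toLinearMap Y = e Y from rfl,
        ← hac, ← hbd]
      module
    rw [hez2] at h8
    exact h8
  have h5 : (p*a + q*b - 1) • X' + (p*c + q*d) • Y' = 0 := by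
    have step : (p*a + q*b - 1) • X' + (p*c + q*d) • Y'
        = ((p*a + q*b) • X' + (p*c + q*d) • Y') - X' := by module
    rw [step, ← hXid, sub_self]
  obtain ⟨hE1, hE2⟩ := indep' _ _ h5
  have h6 : (r*a + s*b) • X' + (r*c + s*d - 1) • Y' = 0 := by
    have step : (r*a + s*b) • X' + (r*c + s*d - 1) • Y'
        = ((r*a + s*b) • X' + (r*c + s*d) • Y') - Y' := by module
    rw [step, ← hYid, sub_self]
  obtain ⟨hE3, hE4⟩ := indep' _ _ h6
  have hdet : a*d - b*c ≠ 0 := by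
    intro h0
    have h7 : (p*s - q*r) * (a*d - b*c) = 1 := by
      linear_combination (r*c + s*d) * hE1 + hE4 - (r*a + s*b) * hE2
    rw [h0, mul_zero] at h7
    exact one_ne_zero h7.symm
  -- the substitution endomorphism
  set σ := FreeAlgebra.lift k
    (fun i : Fin 2 => if i = 0 then a • Xg k + c • Yg k else b • Xg k + d • Yg k) with hσ
  have hσX : σ (Xg k) = a • Xg k + c • Yg k := by
    rw [hσ, Xg, FreeAlgebra.lift_ι_apply, if_pos rfl]
  have hσY : σ (Yg k) = b • Xg k + d • Yg k := by
    rw [hσ, Yg, FreeAlgebra.lift_ι_apply, if_neg (by decide)]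
  have hcomp : (qmap (r1 k α') (r2 k α')).comp σ
      = (e.toAlgHom).comp (qmap (r1 k α) (r2 k α)) := by
    apply FreeAlgebra.hom_ext
    funext i
    fin_cases i
    · show qmap (r1 k α') (r2 k α') (σ (FreeAlgebra.ι k 0)) = e.toAlgHom (qmap _ _ (FreeAlgebra.ι k 0))
      rw [show FreeAlgebra.ι k (0 : Fin 2) = Xg k from rfl, hσX, map_add, map_smul, map_smul]
      rw [show e.toAlgHom (qmap (r1 k α) (r2 k α) (Xg k)) = e X from rfl]
      exact hac
    · show qmap (r1 k α') (r2 k α') (σ (FreeAlgebra.ι k 1)) = e.toAlgHom (qmap _ _ (FreeAlgebra.ι k 1))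
      rw [show FreeAlgebra.ι k (1 : Fin 2) = Yg k from rfl, hσY, map_add, map_smul, map_smul]
      rw [show e.toAlgHom (qmap (r1 k α) (r2 k α) (Yg k)) = e Y from rfl]
      exact hbd
  have hzero1 : qmap (r1 k α') (r2 k α') (σ (r1 k α)) = 0 := by
    have h7 := AlgHom.congr_fun hcomp (r1 k α)
    rw [AlgHom.comp_apply, AlgHom.comp_apply] at h7
    rw [h7, qmap_rel1, map_zero]
  have hzero2 : qmap (r1 k α') (r2 k α') (σ (r2 k α)) = 0 := by
    have h7 := AlgHom.congr_fun hcomp (r2 k α)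
    rw [AlgHom.comp_apply, AlgHom.comp_apply] at h7
    rw [h7, qmap_rel2, map_zero]
  -- explicit expansions
  have heeσX : ee k (σ (Xg k)) = a • Xm k + c • Ym k := by
    rw [hσX, map_add, map_smul, map_smul, ee_Xg, ee_Yg]
  have heeσY : ee k (σ (Yg k)) = b • Xm k + d • Ym k := by
    rw [hσY, map_add, map_smul, map_smul, ee_Xg, ee_Yg]
  have hexp1 : ee k (σ (r1 k α)) =
      (a*a*b - α*(b*a*a)) • (ws 0 0 0 : MA k) + (a*a*d - α*(b*a*c)) • ws 0 0 1
      + (a*c*b - α*(b*c*a)) • ws 0 1 0 + (a*c*d - α*(b*c*c)) • ws 0 1 1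
      + (c*a*b - α*(d*a*a)) • ws 1 0 0 + (c*a*d - α*(d*a*c)) • ws 1 0 1
      + (c*c*b - α*(d*c*a)) • ws 1 1 0 + (c*c*d - α*(d*c*c)) • ws 1 1 1 := by
    rw [r1, map_sub, map_smul, map_mul, map_mul, map_mul, map_mul,
      map_sub, map_smul, map_mul, map_mul, map_mul, map_mul,
      heeσX, heeσY, mul3, mul3]
    module
  have hexp2 : ee k (σ (r2 k α)) =
      (a*b*b - α*(b*b*a)) • (ws 0 0 0 : MA k) + (a*b*d - α*(b*b*c)) • ws 0 0 1
      + (a*d*b - α*(b*d*a)) • ws 0 1 0 + (a*d*d - α*(b*d*c)) • ws 0 1 1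
      + (c*b*b - α*(d*b*a)) • ws 1 0 0 + (c*b*d - α*(d*b*c)) • ws 1 0 1
      + (c*d*b - α*(d*d*a)) • ws 1 1 0 + (c*d*d - α*(d*d*c)) • ws 1 1 1 := by
    rw [r2, map_sub, map_smul, map_mul, map_mul, map_mul, map_mul,
      map_sub, map_smul, map_mul, map_mul, map_mul, map_mul,
      heeσX, heeσY, mul3, mul3]
    module
  -- membership in the span of the relators
  have hm1 := pideg3_Idl (supp_ee_r1 α') (supp_ee_r2 α')
    (mem_Idl_of_qmap_eq_zero _ _ _ hzero1)
  have hm2 := pideg3_Idl (supp_ee_r1 α') (supp_ee_r2 α')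
    (mem_Idl_of_qmap_eq_zero _ _ _ hzero2)
  have hfix1 : pideg 3 (ee k (σ (r1 k α))) = ee k (σ (r1 k α)) := by
    rw [hexp1]
    simp only [map_add, map_smul, pideg3_ws]
  have hfix2 : pideg 3 (ee k (σ (r2 k α))) = ee k (σ (r2 k α)) := by
    rw [hexp2]
    simp only [map_add, map_smul, pideg3_ws]
  rw [hfix1, ee_r1, ee_r2, hexp1] at hm1
  rw [hfix2, ee_r1, ee_r2, hexp2] at hm2
  obtain ⟨s₁, t₁, hq1⟩ := Submodule.mem_span_pair.mp hm1
  obtain ⟨s₂, t₂, hq2⟩ := Submodule.mem_span_pair.mp hm2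
  -- extract all coefficients
  have e000 : a*a*b - α*(b*a*a) = 0 := by
    have h9 := congrArg (cf (k := k) (w3 0 0 0)) hq1
    simp [map_add, map_sub, map_smul, cf_apply, ws_apply, smul_eq_mul] at h9
    linear_combination -h9
  have e001 : a*a*d - α*(b*a*c) = s₁ := by
    have h9 := congrArg (cf (k := k) (w3 0 0 1)) hq1
    simp [map_add, map_sub, map_smul, cf_apply, ws_apply, smul_eq_mul] at h9
    linear_combination -h9
  have e011 : a*c*d - α*(b*c*c) = t₁ := by
    have h9 := congrArg (cf (k := k) (w3 0 1 1)) hq1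
    simp [map_add, map_sub, map_smul, cf_apply, ws_apply, smul_eq_mul] at h9
    linear_combination -h9
  have e100 : c*a*b - α*(d*a*a) = -(α'*s₁) := by
    have h9 := congrArg (cf (k := k) (w3 1 0 0)) hq1
    simp [map_add, map_sub, map_smul, cf_apply, ws_apply, smul_eq_mul] at h9
    linear_combination -h9
  have e101 : c*a*d - α*(d*a*c) = 0 := by
    have h9 := congrArg (cf (k := k) (w3 1 0 1)) hq1
    simp [map_add, map_sub, map_smul, cf_apply, ws_apply, smul_eq_mul] at h9
    linear_combination -h9
  have e110 : c*c*b - α*(d*c*a) = -(α'*t₁) := by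
    have h9 := congrArg (cf (k := k) (w3 1 1 0)) hq1
    simp [map_add, map_sub, map_smul, cf_apply, ws_apply, smul_eq_mul] at h9
    linear_combination -h9
  have e111 : c*c*d - α*(d*c*c) = 0 := by
    have h9 := congrArg (cf (k := k) (w3 1 1 1)) hq1
    simp [map_add, map_sub, map_smul, cf_apply, ws_apply, smul_eq_mul] at h9
    linear_combination -h9
  have g001 : a*b*d - α*(b*b*c) = s₂ := by
    have h9 := congrArg (cf (k := k) (w3 0 0 1)) hq2
    simp [map_add, map_sub, map_smul, cf_apply, ws_apply, smul_eq_mul] at h9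
    linear_combination -h9
  have g011 : a*d*d - α*(b*d*c) = t₂ := by
    have h9 := congrArg (cf (k := k) (w3 0 1 1)) hq2
    simp [map_add, map_sub, map_smul, cf_apply, ws_apply, smul_eq_mul] at h9
    linear_combination -h9
  have g100 : c*b*b - α*(d*b*a) = -(α'*s₂) := by
    have h9 := congrArg (cf (k := k) (w3 1 0 0)) hq2
    simp [map_add, map_sub, map_smul, cf_apply, ws_apply, smul_eq_mul] at h9
    linear_combination -h9
  have g110 : c*d*b - α*(d*d*a) = -(α'*t₂) := by
    have h9 := congrArg (cf (k := k) (w3 1 1 0)) hq2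
    simp [map_add, map_sub, map_smul, cf_apply, ws_apply, smul_eq_mul] at h9
    linear_combination -h9
  exact solve α α' a b c d s₁ t₁ s₂ t₂ hα hα' hdet
    e000 e001 e011 e100 e101 e110 e111 g001 g011 g100 g110

lemma griso_self (β : k) : GrIso (r1 k β) (r2 k β) (r1 k β) (r2 k β) :=
  ⟨AlgEquiv.refl, by
    rw [show (AlgEquiv.refl : CubicAlg (r1 k β) (r2 k β) ≃ₐ[k] _).toLinearMap
        = LinearMap.id from rfl, Submodule.map_id]⟩

end Stmt16Aux

/-- For `α ≠ 0` let `A(α) = k⟨x,y⟩/(x²y − α·yx², xy² − α·y²x)`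
(Type P₁).  Then `A(α) ≅ A(α')` as graded algebras iff `α' = α` or `α' = α⁻¹`. -/
theorem stmt16 {k : Type*} [Field k] [IsAlgClosed k] [CharZero k]
    (α α' : k) (hα : α ≠ 0) (hα' : α' ≠ 0) :
    GrIso (Xg k * Xg k * Yg k - α • (Yg k * Xg k * Xg k))
        (Xg k * Yg k * Yg k - α • (Yg k * Yg k * Xg k))
        (Xg k * Xg k * Yg k - α' • (Yg k * Xg k * Xg k))
        (Xg k * Yg k * Yg k - α' • (Yg k * Yg k * Xg k)) ↔
      (α' = α ∨ α' = α⁻¹) := by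
  constructor
  · intro h
    exact Stmt16Aux.forward α α' hα hα' h
  · intro h
    rcases h with h | h
    · subst h
      exact Stmt16Aux.griso_self α'
    · subst h
      exact Stmt16Aux.griso_swap α α⁻¹ hα rfl

end
end
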